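/- Let f : V → ℝ be smooth on an open set V ⊆ ℝ² with f, f_y, f_u nowhere zero on V, and let ∇₁ = (f/f_y)·∂/∂y and ∇₂ = (f/f_u)·∂/∂u be vector fields on V. Then their Lie bracket satisfies [∇₁, ∇₂] = (−1 + J22(f))·∇₁ + (1 − J22(f))·∇₂ on V, where J22(f) = f·f_{yu}/(f_y·f_u); equivalently, for every smooth g : V → ℝ, ∇₁(∇₂ g) − ∇₂(∇₁ g) = (−1 + J22(f))·∇₁ g + (1 − J22(f))·∇₂ g. -/

import Mathlib

/-!
The bracket of `a ∂_y` and `b ∂_u` is `a b_y ∂_u - b a_u ∂_y`: the second derivatives of the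
argument cancel by the symmetry of mixed partials. For `a = f / f_y` and `b = f / f_u` the
quotient rule gives `a b_y = (f / f_u) (1 - J22)` and `b a_u = (f / f_y) (1 - J22)`.
-/

/-- Partial derivative in the first variable. -/
noncomputable def pd1 (f : ℝ → ℝ → ℝ) : ℝ → ℝ → ℝ := fun y u => deriv (fun s => f s u) y

/-- Partial derivative in the second variable. -/
noncomputable def pd2 (f : ℝ → ℝ → ℝ) : ℝ → ℝ → ℝ := fun y u => deriv (f y) u

/-- Second-order differential invariant `J21 = f·f_yy / f_y²`. -/
noncomputable def J21 (f : ℝ → ℝ → ℝ) : ℝ → ℝ → ℝ := fun y u =>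
  f y u * pd1 (pd1 f) y u / (pd1 f y u) ^ 2

/-- Second-order differential invariant `J22 = f·f_yu / (f_y·f_u)`. -/
noncomputable def J22 (f : ℝ → ℝ → ℝ) : ℝ → ℝ → ℝ := fun y u =>
  f y u * pd2 (pd1 f) y u / (pd1 f y u * pd2 f y u)

/-- Third-order differential invariant `J31 = f²·f_yyy / f_y³`. -/
noncomputable def J31 (f : ℝ → ℝ → ℝ) : ℝ → ℝ → ℝ := fun y u =>
  f y u ^ 2 * pd1 (pd1 (pd1 f)) y u / (pd1 f y u) ^ 3

/-- Third-order differential invariant `J32 = f²·f_yyu / (f_y²·f_u)`. -/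
noncomputable def J32 (f : ℝ → ℝ → ℝ) : ℝ → ℝ → ℝ := fun y u =>
  f y u ^ 2 * pd2 (pd1 (pd1 f)) y u / ((pd1 f y u) ^ 2 * pd2 f y u)

/-- Third-order differential invariant `J33 = f²·f_yuu/(f_u²·f_y) − J22·f·f_uu/f_u²`. -/
noncomputable def J33 (f : ℝ → ℝ → ℝ) : ℝ → ℝ → ℝ := fun y u =>
  f y u ^ 2 * pd2 (pd2 (pd1 f)) y u / ((pd2 f y u) ^ 2 * pd1 f y u)
    - J22 f y u * (f y u * pd2 (pd2 f) y u / (pd2 f y u) ^ 2)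

/-- Fourth-order differential invariant `J41 = f³·f_yyyy / f_y⁴`. -/
noncomputable def J41 (f : ℝ → ℝ → ℝ) : ℝ → ℝ → ℝ := fun y u =>
  f y u ^ 3 * pd1 (pd1 (pd1 (pd1 f))) y u / (pd1 f y u) ^ 4

/-- Fourth-order differential invariant
`J44 = f³·f_yuuu/(f_y·f_u³) − 3·J33·f·f_uu/f_u² − J22·f²·f_uuu/f_u³`. -/
noncomputable def J44 (f : ℝ → ℝ → ℝ) : ℝ → ℝ → ℝ := fun y u =>
  f y u ^ 3 * pd2 (pd2 (pd2 (pd1 f))) y u / (pd1 f y u * (pd2 f y u) ^ 3)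
    - 3 * J33 f y u * (f y u * pd2 (pd2 f) y u / (pd2 f y u) ^ 2)
    - J22 f y u * (f y u ^ 2 * pd2 (pd2 (pd2 f)) y u / (pd2 f y u) ^ 3)

/-- The invariant derivation `∇₁ = (f/f_y)·∂/∂y` applied to `g`. -/
noncomputable def nab1 (f g : ℝ → ℝ → ℝ) : ℝ → ℝ → ℝ := fun y u =>
  f y u / pd1 f y u * pd1 g y u

/-- The invariant derivation `∇₂ = (f/f_u)·∂/∂u` applied to `g`. -/
noncomputable def nab2 (f g : ℝ → ℝ → ℝ) : ℝ → ℝ → ℝ := fun y u =>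
  f y u / pd2 f y u * pd2 g y u

open Function Filter Set

section PartialDerivatives

variable {f g a b : ℝ → ℝ → ℝ} {y u : ℝ} {V : Set (ℝ × ℝ)}

lemma HasFDerivAt.hasDerivAt_uncurry_fst {L : ℝ × ℝ →L[ℝ] ℝ}
    (h : HasFDerivAt (uncurry f) L (y, u)) :
    HasDerivAt (fun s => f s u) (L (1, 0)) y := by
  simpa [Function.comp_def] using
    h.comp_hasDerivAt y ((hasDerivAt_id y).prodMk (hasDerivAt_const y u))

lemma HasFDerivAt.hasDerivAt_uncurry_snd {L : ℝ × ℝ →L[ℝ] ℝ}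
    (h : HasFDerivAt (uncurry f) L (y, u)) :
    HasDerivAt (f y) (L (0, 1)) u := by
  simpa [Function.comp_def] using
    h.comp_hasDerivAt u ((hasDerivAt_const u y).prodMk (hasDerivAt_id u))

lemma pd1_eq_fderiv (h : DifferentiableAt ℝ (uncurry f) (y, u)) :
    pd1 f y u = fderiv ℝ (uncurry f) (y, u) (1, 0) :=
  h.hasFDerivAt.hasDerivAt_uncurry_fst.deriv

lemma pd2_eq_fderiv (h : DifferentiableAt ℝ (uncurry f) (y, u)) :
    pd2 f y u = fderiv ℝ (uncurry f) (y, u) (0, 1) :=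
  h.hasFDerivAt.hasDerivAt_uncurry_snd.deriv

lemma DifferentiableAt.hasDerivAt_pd1 (h : DifferentiableAt ℝ (uncurry f) (y, u)) :
    HasDerivAt (fun s => f s u) (pd1 f y u) y := by
  rw [pd1_eq_fderiv h]
  exact h.hasFDerivAt.hasDerivAt_uncurry_fst

lemma DifferentiableAt.hasDerivAt_pd2 (h : DifferentiableAt ℝ (uncurry f) (y, u)) :
    HasDerivAt (f y) (pd2 f y u) u := by
  rw [pd2_eq_fderiv h]
  exact h.hasFDerivAt.hasDerivAt_uncurry_snd

lemma DifferentiableAt.uncurry_div (ha : DifferentiableAt ℝ (uncurry a) (y, u))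
    (hb : DifferentiableAt ℝ (uncurry b) (y, u)) (h : b y u ≠ 0) :
    DifferentiableAt ℝ (uncurry fun s t => a s t / b s t) (y, u) :=
  ha.mul (hb.inv h)

lemma uncurry_pd1_eqOn_fderiv (hV : IsOpen V) (hf : ContDiffOn ℝ 1 (uncurry f) V) :
    EqOn (uncurry (pd1 f)) (fun p => fderiv ℝ (uncurry f) p (1, 0)) V := fun _ hp =>
  pd1_eq_fderiv ((hf.contDiffAt (hV.mem_nhds hp)).differentiableAt one_ne_zero)

lemma uncurry_pd2_eqOn_fderiv (hV : IsOpen V) (hf : ContDiffOn ℝ 1 (uncurry f) V) :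
    EqOn (uncurry (pd2 f)) (fun p => fderiv ℝ (uncurry f) p (0, 1)) V := fun _ hp =>
  pd2_eq_fderiv ((hf.contDiffAt (hV.mem_nhds hp)).differentiableAt one_ne_zero)

lemma ContDiffOn.uncurry_pd1 {n : WithTop ℕ∞} (hV : IsOpen V)
    (hf : ContDiffOn ℝ (n + 1) (uncurry f) V) : ContDiffOn ℝ n (uncurry (pd1 f)) V :=
  ((hf.fderiv_of_isOpen hV le_rfl).clm_apply (contDiffOn_const (c := ((1 : ℝ), (0 : ℝ))))).congr
    (uncurry_pd1_eqOn_fderiv hV (hf.of_le le_add_self))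

lemma ContDiffOn.uncurry_pd2 {n : WithTop ℕ∞} (hV : IsOpen V)
    (hf : ContDiffOn ℝ (n + 1) (uncurry f) V) : ContDiffOn ℝ n (uncurry (pd2 f)) V :=
  ((hf.fderiv_of_isOpen hV le_rfl).clm_apply (contDiffOn_const (c := ((0 : ℝ), (1 : ℝ))))).congr
    (uncurry_pd2_eqOn_fderiv hV (hf.of_le le_add_self))

lemma fderiv_uncurry_pd1 {p : ℝ × ℝ} (hV : IsOpen V) (hf : ContDiffOn ℝ 2 (uncurry f) V)
    (hp : p ∈ V) (v : ℝ × ℝ) :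
    fderiv ℝ (uncurry (pd1 f)) p v = fderiv ℝ (fderiv ℝ (uncurry f)) p v (1, 0) := by
  have hD : DifferentiableAt ℝ (fderiv ℝ (uncurry f)) p :=
    ((hf.fderiv_of_isOpen hV le_rfl).contDiffAt (hV.mem_nhds hp)).differentiableAt one_ne_zero
  have hEq :=
    eventuallyEq_of_mem (hV.mem_nhds hp) (uncurry_pd1_eqOn_fderiv hV (hf.of_le one_le_two))
  rw [hEq.fderiv_eq, fderiv_clm_apply hD (differentiableAt_const _)]
  simp

lemma fderiv_uncurry_pd2 {p : ℝ × ℝ} (hV : IsOpen V) (hf : ContDiffOn ℝ 2 (uncurry f) V)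
    (hp : p ∈ V) (v : ℝ × ℝ) :
    fderiv ℝ (uncurry (pd2 f)) p v = fderiv ℝ (fderiv ℝ (uncurry f)) p v (0, 1) := by
  have hD : DifferentiableAt ℝ (fderiv ℝ (uncurry f)) p :=
    ((hf.fderiv_of_isOpen hV le_rfl).contDiffAt (hV.mem_nhds hp)).differentiableAt one_ne_zero
  have hEq :=
    eventuallyEq_of_mem (hV.mem_nhds hp) (uncurry_pd2_eqOn_fderiv hV (hf.of_le one_le_two))
  rw [hEq.fderiv_eq, fderiv_clm_apply hD (differentiableAt_const _)]
  simp

lemma ContDiffOn.differentiableAt_uncurry_pd1 (hV : IsOpen V) (hf : ContDiffOn ℝ 2 (uncurry f) V)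
    (hp : (y, u) ∈ V) : DifferentiableAt ℝ (uncurry (pd1 f)) (y, u) :=
  ((hf.uncurry_pd1 (n := 1) hV).contDiffAt (hV.mem_nhds hp)).differentiableAt one_ne_zero

lemma ContDiffOn.differentiableAt_uncurry_pd2 (hV : IsOpen V) (hf : ContDiffOn ℝ 2 (uncurry f) V)
    (hp : (y, u) ∈ V) : DifferentiableAt ℝ (uncurry (pd2 f)) (y, u) :=
  ((hf.uncurry_pd2 (n := 1) hV).contDiffAt (hV.mem_nhds hp)).differentiableAt one_ne_zero

lemma pd2_pd1_eq_pd1_pd2 (hV : IsOpen V) (hf : ContDiffOn ℝ 2 (uncurry f) V) (hp : (y, u) ∈ V) :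
    pd2 (pd1 f) y u = pd1 (pd2 f) y u := by
  have hsymm : IsSymmSndFDerivAt ℝ (uncurry f) (y, u) :=
    (hf.contDiffAt (hV.mem_nhds hp)).isSymmSndFDerivAt (by simp)
  rw [pd2_eq_fderiv (hf.differentiableAt_uncurry_pd1 hV hp),
    pd1_eq_fderiv (hf.differentiableAt_uncurry_pd2 hV hp),
    fderiv_uncurry_pd1 hV hf hp, fderiv_uncurry_pd2 hV hf hp, hsymm]

theorem bracket_mul_pd1_mul_pd2 (hV : IsOpen V) (ha : DifferentiableAt ℝ (uncurry a) (y, u))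
    (hb : DifferentiableAt ℝ (uncurry b) (y, u)) (hg : ContDiffOn ℝ 2 (uncurry g) V)
    (hp : (y, u) ∈ V) :
    a y u * pd1 (fun s t => b s t * pd2 g s t) y u
        - b y u * pd2 (fun s t => a s t * pd1 g s t) y u
      = a y u * pd1 b y u * pd2 g y u - b y u * pd2 a y u * pd1 g y u := by
  have hb_g2 : pd1 (fun s t => b s t * pd2 g s t) y u
      = pd1 b y u * pd2 g y u + b y u * pd1 (pd2 g) y u :=
    (hb.hasDerivAt_pd1.mul (hg.differentiableAt_uncurry_pd2 hV hp).hasDerivAt_pd1).deriv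
  have ha_g1 : pd2 (fun s t => a s t * pd1 g s t) y u
      = pd2 a y u * pd1 g y u + a y u * pd2 (pd1 g) y u :=
    (ha.hasDerivAt_pd2.mul (hg.differentiableAt_uncurry_pd1 hV hp).hasDerivAt_pd2).deriv
  rw [hb_g2, ha_g1, pd2_pd1_eq_pd1_pd2 hV hg hp]
  ring

end PartialDerivatives

theorem bracket_nabla1_nabla2_general (V : Set (ℝ × ℝ)) (hV : IsOpen V) (f : ℝ → ℝ → ℝ)
    (hf : ContDiffOn ℝ (⊤ : ℕ∞) (fun p : ℝ × ℝ => f p.1 p.2) V)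
    (hfy : ∀ y u : ℝ, (y, u) ∈ V → pd1 f y u ≠ 0)
    (hfu : ∀ y u : ℝ, (y, u) ∈ V → pd2 f y u ≠ 0)
    (g : ℝ → ℝ → ℝ) (hg : ContDiffOn ℝ (⊤ : ℕ∞) (fun p : ℝ × ℝ => g p.1 p.2) V) :
    ∀ y u : ℝ, (y, u) ∈ V →
      nab1 f (nab2 f g) y u - nab2 f (nab1 f g) y u
        = (-1 + J22 f y u) * nab1 f g y u + (1 - J22 f y u) * nab2 f g y u := by
  intro y u hp
  have hf2 : ContDiffOn ℝ 2 (uncurry f) V := hf.of_le (by norm_cast)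
  have hg2 : ContDiffOn ℝ 2 (uncurry g) V := hg.of_le (by norm_cast)
  have hF := (hf2.contDiffAt (hV.mem_nhds hp)).differentiableAt two_ne_zero
  have hF1 := hf2.differentiableAt_uncurry_pd1 hV hp
  have hF2 := hf2.differentiableAt_uncurry_pd2 hV hp
  have hfy' := hfy y u hp
  have hfu' := hfu y u hp
  have hb1 : pd1 (fun s t => f s t / pd2 f s t) y u
      = (pd1 f y u * pd2 f y u - f y u * pd1 (pd2 f) y u) / pd2 f y u ^ 2 :=
    (hF.hasDerivAt_pd1.div hF2.hasDerivAt_pd1 hfu').deriv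
  have ha2 : pd2 (fun s t => f s t / pd1 f s t) y u
      = (pd2 f y u * pd1 f y u - f y u * pd2 (pd1 f) y u) / pd1 f y u ^ 2 :=
    (hF.hasDerivAt_pd2.div hF1.hasDerivAt_pd2 hfy').deriv
  calc nab1 f (nab2 f g) y u - nab2 f (nab1 f g) y u
      = f y u / pd1 f y u * pd1 (fun s t => f s t / pd2 f s t) y u * pd2 g y u
          - f y u / pd2 f y u * pd2 (fun s t => f s t / pd1 f s t) y u * pd1 g y u :=
        bracket_mul_pd1_mul_pd2 hV (hF.uncurry_div hF1 hfy') (hF.uncurry_div hF2 hfu') hg2 hp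
    _ = (-1 + J22 f y u) * nab1 f g y u + (1 - J22 f y u) * nab2 f g y u := by
      rw [hb1, ha2, ← pd2_pd1_eq_pd1_pd2 hV hf2 hp]
      simp only [nab1, nab2, J22]
      field_simp
      ring

/-- The commutation relation `[∇₁, ∇₂] = (−1 + J22)·∇₁ + (1 − J22)·∇₂` for the invariant
derivations `∇₁ = (f/f_y)·∂/∂y` and `∇₂ = (f/f_u)·∂/∂u`: for every smooth `g` on `V`,
`∇₁(∇₂ g) − ∇₂(∇₁ g) = (−1 + J22(f))·∇₁ g + (1 − J22(f))·∇₂ g` on `V`. -/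
theorem bracket_nabla1_nabla2 (V : Set (ℝ × ℝ)) (hV : IsOpen V) (f : ℝ → ℝ → ℝ)
    (hf : ContDiffOn ℝ (⊤ : ℕ∞) (fun p : ℝ × ℝ => f p.1 p.2) V)
    (hf0 : ∀ y u : ℝ, (y, u) ∈ V → f y u ≠ 0)
    (hfy : ∀ y u : ℝ, (y, u) ∈ V → pd1 f y u ≠ 0)
    (hfu : ∀ y u : ℝ, (y, u) ∈ V → pd2 f y u ≠ 0)
    (g : ℝ → ℝ → ℝ) (hg : ContDiffOn ℝ (⊤ : ℕ∞) (fun p : ℝ × ℝ => g p.1 p.2) V) :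
    ∀ y u : ℝ, (y, u) ∈ V →
      nab1 f (nab2 f g) y u - nab2 f (nab1 f g) y u
        = (-1 + J22 f y u) * nab1 f g y u + (1 - J22 f y u) * nab2 f g y u :=
  bracket_nabla1_nabla2_general V hV f hf hfy hfu g hg
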